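/- The true source is the unique image source closest to any point inside the room: for every m ∈ ℝ³ with 0 < mᵢ < Lᵢ for all i, the point (d₁, d₂, d₃) belongs to S(d, L), and every other point r ∈ S(d, L) with r ≠ (d₁, d₂, d₃) satisfies ‖m − r‖ > ‖m − (d₁, d₂, d₃)‖ in Euclidean norm. -/

import Mathlib

/-- The full shoebox image-source set `S(d, L)`: points
`(ε₁d₁ + 2q₁L₁, ε₂d₂ + 2q₂L₂, ε₃d₃ + 2q₃L₃)` with `εᵢ ∈ {-1, 1}` and `qᵢ ∈ ℤ`. -/
noncomputable def imageSourceSet (L d : Fin 3 → ℝ) : Set (EuclideanSpace ℝ (Fin 3)) :=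
  {x | ∃ (ε : Fin 3 → ℝ) (q : Fin 3 → ℤ),
    (∀ i, ε i = 1 ∨ ε i = -1) ∧
    (∀ i, x i = ε i * d i + 2 * (q i : ℝ) * L i)}

/-- The true source position `(d₁, d₂, d₃)` as a point of `ℝ³`. -/
noncomputable def srcPt (d : Fin 3 → ℝ) : EuclideanSpace ℝ (Fin 3) := WithLp.toLp 2 (fun i => d i)

/-!
Coordinatewise, every image `x = ±d + 2qL` other than `d` itself lies beyond one of the two
first reflections of `d`: `x ≤ -d` (reflection in the wall `0`) or `x ≥ 2L - d` (reflection in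
the wall `L`). A point `m` of `(0, L)` is strictly closer to `d` than to either reflection, hence
than to `x`. So `m` is at least as close to `d` as to `r` in every coordinate, and strictly
closer in a coordinate where `r` differs from the true source.
-/

section ImageCoordinate

variable {L d m x : ℝ}

lemma le_neg_or_two_mul_sub_le_of_image (hd₀ : 0 < d) (hdL : d < L) {ε : ℝ} {q : ℤ}
    (hε : ε = 1 ∨ ε = -1) (hx : x = ε * d + 2 * q * L) (hne : x ≠ d) :
    x ≤ -d ∨ 2 * L - d ≤ x := by
  obtain hq | rfl | hq : q ≤ -1 ∨ q = 0 ∨ 1 ≤ q := by omega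
  · have hq' : (q : ℝ) ≤ -1 := by exact_mod_cast hq
    left
    rcases hε with rfl | rfl <;> nlinarith
  · rcases hε with rfl | rfl
    · exact absurd (by simpa using hx) hne
    · left; simp [hx]
  · have hq' : (1 : ℝ) ≤ q := by exact_mod_cast hq
    right
    rcases hε with rfl | rfl <;> nlinarith

lemma abs_sub_lt_abs_sub_of_le_neg (hm : 0 < m) (hd : 0 < d) (hx : x ≤ -d) :
    |m - d| < |m - x| := by
  rw [abs_of_nonneg (by linarith : 0 ≤ m - x), abs_sub_lt_iff]
  constructor <;> linarith

lemma abs_sub_lt_abs_sub_of_two_mul_sub_le (hm : m < L) (hd : d < L) (hx : 2 * L - d ≤ x) :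
    |m - d| < |m - x| := by
  rw [abs_of_nonpos (by linarith : m - x ≤ 0), abs_sub_lt_iff]
  constructor <;> linarith

lemma abs_sub_lt_abs_sub_of_image (hm : 0 < m ∧ m < L) (hd : 0 < d ∧ d < L) {ε : ℝ} {q : ℤ}
    (hε : ε = 1 ∨ ε = -1) (hx : x = ε * d + 2 * q * L) (hne : x ≠ d) :
    |m - d| < |m - x| :=
  (le_neg_or_two_mul_sub_le_of_image hd.1 hd.2 hε hx hne).elim
    (abs_sub_lt_abs_sub_of_le_neg hm.1 hd.1) (abs_sub_lt_abs_sub_of_two_mul_sub_le hm.2 hd.2)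

end ImageCoordinate

lemma EuclideanSpace.norm_lt_norm_of_abs_le {ι : Type*} [Fintype ι] {x y : EuclideanSpace ℝ ι}
    (hle : ∀ i, |x i| ≤ |y i|) (hlt : ∃ i, |x i| < |y i|) : ‖x‖ < ‖y‖ := by
  simp only [EuclideanSpace.norm_eq, Real.norm_eq_abs]
  refine Real.sqrt_lt_sqrt (by positivity) (Finset.sum_lt_sum (fun i _ => ?_) ?_)
  · exact pow_le_pow_left₀ (abs_nonneg _) (hle i) 2
  · obtain ⟨i, hi⟩ := hlt
    exact ⟨i, Finset.mem_univ i, pow_lt_pow_left₀ hi (abs_nonneg _) two_ne_zero⟩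

theorem true_source_is_closest_general (L d : Fin 3 → ℝ)
    (hd : ∀ i, 0 < d i ∧ d i < L i)
    (m : EuclideanSpace ℝ (Fin 3)) (hm : ∀ i, 0 < m i ∧ m i < L i) :
    srcPt d ∈ imageSourceSet L d ∧
    ∀ r ∈ imageSourceSet L d, r ≠ srcPt d → ‖m - srcPt d‖ < ‖m - r‖ := by
  refine ⟨⟨fun _ => 1, fun _ => 0, fun _ => Or.inl rfl, fun i => by simp [srcPt]⟩, ?_⟩
  rintro r ⟨ε, q, hε, hr⟩ hne
  have closer (i : Fin 3) (hi : r i ≠ d i) : |m i - d i| < |m i - r i| :=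
    abs_sub_lt_abs_sub_of_image (hm i) (hd i) (hε i) (hr i) hi
  obtain ⟨i₀, hi₀⟩ : ∃ i, r i ≠ d i := by
    by_contra! h
    exact hne (by ext i; simpa [srcPt] using h i)
  refine EuclideanSpace.norm_lt_norm_of_abs_le (fun i => ?_)
    ⟨i₀, by simpa [srcPt] using closer i₀ hi₀⟩
  by_cases hi : r i = d i
  · simp [srcPt, hi]
  · simpa [srcPt] using (closer i hi).le

/-- The true source `(d₁, d₂, d₃)` is the unique image source closest to any point strictly
inside the room (in Euclidean norm). -/
theorem true_source_is_closest (L d : Fin 3 → ℝ)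
    (hL : ∀ i, 0 < L i) (hd : ∀ i, 0 < d i ∧ d i < L i)
    (m : EuclideanSpace ℝ (Fin 3)) (hm : ∀ i, 0 < m i ∧ m i < L i) :
    srcPt d ∈ imageSourceSet L d ∧
    ∀ r ∈ imageSourceSet L d, r ≠ srcPt d → ‖m - srcPt d‖ < ‖m - r‖ :=
  true_source_is_closest_general L d hd m hm
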